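/- Let G_enc be the error-correcting Gray code built from an injective code C_enc with minimum distance D(C) via the four-fold concatenation construction. Then G_enc is injective. -/

import Mathlib

/-!
Write `M v = Cenc v ++ Lenc v`, so that `Kenc v = M v ++ M v`. On the first `d` coordinates
`Lenc` copies or complements `Cenc` according to parity and it ends in a constant block of length
`D`, so `M a` and `M a'` are at Hamming distance exactly `d + D` whenever `a + a'` is odd. Hence
`b q` enumerates all `2 (d + D)` positions where `Kenc q` and `Kenc (q + 1)` differ, the first
`d + D` of them in the first half.

Consequently the word `v = q (2 (d + D)) + r` has second half `M q` if `r ≤ d + D` and first half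
`M (q + 1)` if `r ≥ d + D`, and injectivity of `Cenc` recovers `q` when both words are in the same
range. If `d + D < r`, the second half lies strictly between `M q` and `M (q + 1)`, so it is at
distance `< d + D` from both; it therefore cannot be a word `M q''`, since `q''` has parity
opposite to `q` or to `q + 1`. Finally, within a block the words for `r < r'` differ at `b q r`.
-/

open Finset

section Hamming

variable {ι α : Type*} [Fintype ι] [DecidableEq α]

theorem hammingDist_lt_of_forall_eq_or_eq {w x y : ι → α} (h : ∀ j, w j = x j ∨ w j = y j)
    (hne : w ≠ y) : hammingDist w x < hammingDist x y := by
  obtain ⟨j, hj⟩ := Function.ne_iff.1 hne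
  have hwx : w j = x j := (h j).resolve_right hj
  refine card_lt_card ⟨fun k hk => ?_, fun hsub => ?_⟩
  · simp only [mem_filter, mem_univ, true_and] at hk ⊢
    exact fun hxy => hk ((h k).resolve_left hk ▸ hxy.symm)
  · exact (mem_filter.1 (hsub (mem_filter.2 ⟨mem_univ j, hwx ▸ hj⟩))).2 hwx

theorem hammingDist_add_hammingDist_not (x y : ι → Bool) :
    hammingDist x y + hammingDist x (fun j => !y j) = Fintype.card ι := by
  rw [hammingDist, hammingDist, card_filter, card_filter, ← sum_add_distrib,
    Fintype.card_eq_sum_ones]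
  exact sum_congr rfl fun j _ => by cases x j <;> cases y j <;> rfl

end Hamming

section Append

variable {α : Type*} [DecidableEq α] {n n' : ℕ}

theorem hammingDist_append (x₁ y₁ : Fin n → α) (x₂ y₂ : Fin n' → α) :
    hammingDist (Fin.append x₁ x₂) (Fin.append y₁ y₂) = hammingDist x₁ y₁ + hammingDist x₂ y₂ := by
  simp only [hammingDist, card_filter, Fin.sum_univ_add, Fin.append_left, Fin.append_right]

theorem card_filter_lt_and_append_ne (x₁ y₁ : Fin n → α) (x₂ y₂ : Fin n' → α) :
    #{j : Fin (n + n') | (j : ℕ) < n ∧ Fin.append x₁ x₂ j ≠ Fin.append y₁ y₂ j} =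
      hammingDist x₁ y₁ := by
  simp [hammingDist, card_filter, Fin.sum_univ_add, -sum_boole]

end Append

theorem Fin.lt_iff_lt_card_filter_of_monotone {g : ℕ} {f : Fin g → ℕ} (hf : Monotone f)
    (c : ℕ) (i : Fin g) : f i < c ↔ (i : ℕ) < #{i' | f i' < c} := by
  constructor
  · intro h
    calc (i : ℕ) < #(Iic i) := by simp
      _ ≤ #{i' | f i' < c} := card_le_card fun i' hi' => by
        simpa using (hf (mem_Iic.1 hi')).trans_lt h
  · intro h
    by_contra h'
    have : #{i' | f i' < c} ≤ #(Iio i) := card_le_card fun i' hi' => by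
      simp only [mem_filter, mem_univ, true_and] at hi'
      exact mem_Iio.2 (lt_of_not_ge fun hii' => h' ((hf hii').trans_lt hi'))
    simp at this
    omega

theorem succ_div_lt_of_le_pred_mul {v g m : ℕ} (hv : v ≤ (m - 1) * g) (hr : 0 < v % g) :
    v / g + 1 < m :=
  Nat.lt_sub_iff_add_lt.1 <| Nat.lt_of_mul_lt_mul_right (a := g) <| by
    have := Nat.div_add_mod' v g
    omega

section FlipPrefix

variable {ι α : Type*} [DecidableEq ι] {g : ℕ}

def flipPrefix (x y : ι → α) (b : Fin g → ι) (r : ℕ) (j : ι) : α :=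
  if ∃ i : Fin g, (i : ℕ) < r ∧ b i = j then y j else x j

variable {x y : ι → α} {b : Fin g → ι} {r : ℕ}

@[simp]
theorem flipPrefix_zero : flipPrefix x y b 0 = x := by
  funext j
  simp [flipPrefix]

theorem flipPrefix_apply_eq_or (j : ι) :
    flipPrefix x y b r j = x j ∨ flipPrefix x y b r j = y j := by
  unfold flipPrefix
  split_ifs <;> simp

theorem flipPrefix_apply_of_forall_ne {j : ι} (h : ∀ i : Fin g, (i : ℕ) < r → b i ≠ j) :
    flipPrefix x y b r j = x j :=
  if_neg fun ⟨i, hi, hij⟩ => h i hi hij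

theorem flipPrefix_apply_of_lt {i : Fin g} (hi : (i : ℕ) < r) :
    flipPrefix x y b r (b i) = y (b i) :=
  if_pos ⟨i, hi, rfl⟩

theorem flipPrefix_apply_of_le (hb : Function.Injective b) {i : Fin g} (hi : r ≤ i) :
    flipPrefix x y b r (b i) = x (b i) :=
  flipPrefix_apply_of_forall_ne fun i' hi' h => by rw [hb h] at hi'; omega

theorem flipPrefix_ne_of_lt (hb : Function.Injective b) (hxy : ∀ i, x (b i) ≠ y (b i))
    {r' : ℕ} (hr : r < g) (hlt : r < r') : flipPrefix x y b r ≠ flipPrefix x y b r' := by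
  intro h
  let i : Fin g := ⟨r, hr⟩
  apply hxy i
  rw [← flipPrefix_apply_of_le (x := x) (y := y) hb (i := i) le_rfl,
    ← flipPrefix_apply_of_lt (x := x) (y := y) (i := i) hlt, h]

end FlipPrefix

section DiffEnum

variable {ι α : Type*} {g : ℕ}

structure IsDiffEnum [Preorder ι] (x y : ι → α) (b : Fin g → ι) : Prop where
  strictMono : StrictMono b
  ne_iff_mem_range : ∀ j, x j ≠ y j ↔ j ∈ Set.range b

theorem IsDiffEnum.of_hammingDist_le [Fintype ι] [DecidableEq ι] [Preorder ι] [DecidableEq α]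
    {x y : ι → α} {b : Fin g → ι} (hb : StrictMono b) (hxy : ∀ i, x (b i) ≠ y (b i))
    (h : hammingDist x y ≤ g) : IsDiffEnum x y b := by
  have himage : univ.image b = univ.filter fun j => x j ≠ y j := by
    refine eq_of_subset_of_card_le (fun j hj => ?_) ?_
    · obtain ⟨i, -, rfl⟩ := mem_image.1 hj
      simpa using hxy i
    · rwa [card_image_of_injective _ hb.injective, card_fin]
  refine ⟨hb, fun j => ?_⟩
  simpa [eq_comm] using (congrArg (j ∈ ·) himage).symm

variable {n n' : ℕ} {x₁ y₁ : Fin n → α} {x₂ y₂ : Fin n' → α} {b : Fin g → Fin (n + n')}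

theorem IsDiffEnum.apply_ne (h : IsDiffEnum (Fin.append x₁ x₂) (Fin.append y₁ y₂) b)
    (i : Fin g) : Fin.append x₁ x₂ (b i) ≠ Fin.append y₁ y₂ (b i) :=
  (h.ne_iff_mem_range _).2 ⟨i, rfl⟩

variable [DecidableEq α]

theorem IsDiffEnum.lt_iff_lt_hammingDist
    (h : IsDiffEnum (Fin.append x₁ x₂) (Fin.append y₁ y₂) b) (i : Fin g) :
    (b i : ℕ) < n ↔ (i : ℕ) < hammingDist x₁ y₁ := by
  have himage : (univ.filter fun i => (b i : ℕ) < n).map ⟨b, h.strictMono.injective⟩ =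
      univ.filter fun j : Fin (n + n') => (j : ℕ) < n ∧ Fin.append x₁ x₂ j ≠ Fin.append y₁ y₂ j := by
    ext j
    simp only [mem_map, mem_filter, mem_univ, true_and, Function.Embedding.coeFn_mk,
      h.ne_iff_mem_range, Set.mem_range]
    constructor
    · rintro ⟨i, hi, rfl⟩
      exact ⟨hi, i, rfl⟩
    · rintro ⟨hj, i, rfl⟩
      exact ⟨i, hj, rfl⟩
  rw [Fin.lt_iff_lt_card_filter_of_monotone (f := fun i => (b i : ℕ)) h.strictMono.monotone,
    ← card_filter_lt_and_append_ne x₁ y₁ x₂ y₂, ← himage, card_map]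

variable {r : ℕ}

theorem IsDiffEnum.flipPrefix_comp_natAdd
    (h : IsDiffEnum (Fin.append x₁ x₂) (Fin.append y₁ y₂) b) (hr : r ≤ hammingDist x₁ y₁) :
    flipPrefix (Fin.append x₁ x₂) (Fin.append y₁ y₂) b r ∘ Fin.natAdd n = x₂ := by
  funext k
  rw [Function.comp_apply, flipPrefix_apply_of_forall_ne, Fin.append_right]
  intro i hi hik
  have := (h.lt_iff_lt_hammingDist i).2 (by omega)
  simp [hik] at this

theorem IsDiffEnum.flipPrefix_comp_castAdd
    (h : IsDiffEnum (Fin.append x₁ x₂) (Fin.append y₁ y₂) b) (hr : hammingDist x₁ y₁ ≤ r) :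
    flipPrefix (Fin.append x₁ x₂) (Fin.append y₁ y₂) b r ∘ Fin.castAdd n' = y₁ := by
  funext k
  rw [Function.comp_apply, ← Fin.append_left y₁ y₂ k]
  by_cases hxy : Fin.append x₁ x₂ (Fin.castAdd n' k) = Fin.append y₁ y₂ (Fin.castAdd n' k)
  · rcases flipPrefix_apply_eq_or (b := b) (r := r) (Fin.castAdd n' k) with h' | h' <;> rw [h']
    exact hxy
  · obtain ⟨i, hi⟩ := (h.ne_iff_mem_range _).1 hxy
    have := (h.lt_iff_lt_hammingDist i).1 (by simp [hi])
    rw [← hi, flipPrefix_apply_of_lt (by omega)]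

theorem IsDiffEnum.hammingDist_flipPrefix_comp_natAdd_lt
    (h : IsDiffEnum (Fin.append x₁ x₂) (Fin.append y₁ y₂) b)
    (hr : hammingDist x₁ y₁ < r) (hrg : r < g) :
    hammingDist (flipPrefix (Fin.append x₁ x₂) (Fin.append y₁ y₂) b r ∘ Fin.natAdd n) x₂ <
        hammingDist x₂ y₂ ∧
      hammingDist (flipPrefix (Fin.append x₁ x₂) (Fin.append y₁ y₂) b r ∘ Fin.natAdd n) y₂ <
        hammingDist y₂ x₂ := by
  set w := flipPrefix (Fin.append x₁ x₂) (Fin.append y₁ y₂) b r ∘ Fin.natAdd n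
  have hbetween (k : Fin n') : w k = x₂ k ∨ w k = y₂ k := by
    have := flipPrefix_apply_eq_or (x := Fin.append x₁ x₂) (y := Fin.append y₁ y₂) (b := b)
      (r := r) (Fin.natAdd n k)
    simpa only [w, Function.comp_apply, Fin.append_right] using this
  have hsnd (i : Fin g) (hi : hammingDist x₁ y₁ ≤ i) : ∃ k, Fin.natAdd n k = b i :=
    ⟨_, Fin.natAdd_subNat_cast (not_lt.1 (mt (h.lt_iff_lt_hammingDist i).1 (not_lt.2 hi)))⟩
  let i₀ : Fin g := ⟨g - 1, by omega⟩
  let i₁ : Fin g := ⟨hammingDist x₁ y₁, by omega⟩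
  obtain ⟨k₀, hk₀⟩ := hsnd i₀ (by simp only [i₀]; omega)
  obtain ⟨k₁, hk₁⟩ := hsnd i₁ le_rfl
  have hw₀ : w k₀ ≠ y₂ k₀ := by
    rw [← Fin.append_right y₁ y₂ k₀]
    simp only [w, Function.comp_apply, hk₀]
    rw [flipPrefix_apply_of_le h.strictMono.injective (by simp only [i₀]; omega)]
    exact h.apply_ne i₀
  have hw₁ : w k₁ ≠ x₂ k₁ := by
    rw [← Fin.append_right x₁ x₂ k₁]
    simp only [w, Function.comp_apply, hk₁]
    rw [flipPrefix_apply_of_lt hr]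
    exact (h.apply_ne i₁).symm
  exact ⟨hammingDist_lt_of_forall_eq_or_eq hbetween fun hw => hw₀ (congrFun hw k₀),
    hammingDist_lt_of_forall_eq_or_eq (fun k => (hbetween k).symm) fun hw => hw₁ (congrFun hw k₁)⟩

end DiffEnum

theorem hammingDist_append_complementCode_of_odd_add {d D : ℕ} {C : ℕ → Fin d → Bool}
    {L : ℕ → Fin (d + D) → Bool}
    (hL : ∀ v, L v = if Even v then Fin.append (C v) (fun _ => false)
        else Fin.append (fun i => !(C v i)) (fun _ => true))
    {a a' : ℕ} (h : Odd (a + a')) :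
    hammingDist (Fin.append (C a) (L a)) (Fin.append (C a') (L a')) = d + D := by
  wlog ha : Even a generalizing a a'
  · rw [hammingDist_comm]
    exact this (add_comm a a' ▸ h) ((Nat.odd_add.1 h).1 (Nat.not_even_iff_odd.1 ha))
  have ha' : ¬Even a' := Nat.not_even_iff_odd.2 ((Nat.odd_add'.1 h).2 ha)
  have hC := hammingDist_add_hammingDist_not (C a) (C a')
  have hpad : hammingDist (fun _ : Fin D => false) (fun _ => true) = D := by simp [hammingDist]
  rw [Fintype.card_fin] at hC
  rw [hL, hL, if_pos ha, if_neg ha', hammingDist_append, hammingDist_append, hpad]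
  omega

def grayWord {ι α : Type*} [DecidableEq ι] {g : ℕ} (K : ℕ → ι → α) (b : ℕ → Fin g → ι)
    (v : ℕ) : ι → α :=
  flipPrefix (K (v / g)) (K (v / g + 1)) (b (v / g)) (v % g)

section GrayWord

variable {α : Type*} [DecidableEq α] {n p m : ℕ} {M : ℕ → Fin n → α} {K : ℕ → Fin (n + n) → α}
  {b : ℕ → Fin (2 * p) → Fin (n + n)}
  (hK : ∀ a, K a = Fin.append (M a) (M a))
  (hM : ∀ a a', Odd (a + a') → hammingDist (M a) (M a') = p)
  (hmono : ∀ q, q + 1 < m → StrictMono (b q))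
  (hdiff : ∀ q, q + 1 < m → ∀ i, K q (b q i) ≠ K (q + 1) (b q i))

include hK hM hmono hdiff

theorem isDiffEnum_of_succ_lt {q : ℕ} (hq : q + 1 < m) :
    IsDiffEnum (Fin.append (M q) (M q)) (Fin.append (M (q + 1)) (M (q + 1))) (b q) := by
  refine .of_hammingDist_le (hmono q hq) (fun i => ?_) ?_
  · rw [← hK, ← hK]
    exact hdiff q hq i
  · rw [hammingDist_append, hM _ _ odd_add_self_one']
    omega

theorem grayWord_comp_natAdd {v : ℕ} (hv : v ≤ (m - 1) * (2 * p)) (hr : v % (2 * p) ≤ p) :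
    grayWord K b v ∘ Fin.natAdd n = M (v / (2 * p)) := by
  rcases (v % (2 * p)).eq_zero_or_pos with h0 | hpos
  · funext k
    simp only [grayWord, h0, flipPrefix_zero, hK, Function.comp_apply, Fin.append_right]
  · have hq := succ_div_lt_of_le_pred_mul hv hpos
    simp only [grayWord, hK]
    refine (isDiffEnum_of_succ_lt hK hM hmono hdiff hq).flipPrefix_comp_natAdd ?_
    rwa [hM _ _ odd_add_self_one']

theorem grayWord_comp_castAdd {v : ℕ} (hv : v ≤ (m - 1) * (2 * p)) (hr : p < v % (2 * p)) :
    grayWord K b v ∘ Fin.castAdd n = M (v / (2 * p) + 1) := by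
  have hq := succ_div_lt_of_le_pred_mul hv (by omega)
  simp only [grayWord, hK]
  refine (isDiffEnum_of_succ_lt hK hM hmono hdiff hq).flipPrefix_comp_castAdd ?_
  rw [hM _ _ odd_add_self_one']
  exact hr.le

theorem hammingDist_grayWord_comp_natAdd_lt (hp : 0 < p) {v : ℕ} (hv : v ≤ (m - 1) * (2 * p))
    (hr : p < v % (2 * p)) :
    hammingDist (grayWord K b v ∘ Fin.natAdd n) (M (v / (2 * p))) < p ∧
      hammingDist (grayWord K b v ∘ Fin.natAdd n) (M (v / (2 * p) + 1)) < p := by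
  have hq := succ_div_lt_of_le_pred_mul hv (by omega)
  have hM' := hM (v / (2 * p)) _ odd_add_self_one'
  simp only [grayWord, hK]
  have := (isDiffEnum_of_succ_lt hK hM hmono hdiff hq).hammingDist_flipPrefix_comp_natAdd_lt
    (by rwa [hM']) (Nat.mod_lt v (by omega))
  rwa [hM', hammingDist_comm (M (v / (2 * p) + 1)), hM'] at this

theorem grayWord_ne_of_mod_le_of_lt_mod (hp : 0 < p) {v v' : ℕ} (hv : v ≤ (m - 1) * (2 * p))
    (hv' : v' ≤ (m - 1) * (2 * p)) (hr : v % (2 * p) ≤ p) (hr' : p < v' % (2 * p)) :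
    grayWord K b v ≠ grayWord K b v' := by
  intro heq
  obtain ⟨hdist, hdist_succ⟩ := hammingDist_grayWord_comp_natAdd_lt hK hM hmono hdiff hp hv' hr'
  rw [← heq, grayWord_comp_natAdd hK hM hmono hdiff hv hr] at hdist hdist_succ
  rcases Nat.even_or_odd (v / (2 * p) + v' / (2 * p)) with heven | hodd
  · rw [hM _ _ (by rw [← add_assoc]; exact heven.add_one)] at hdist_succ
    exact hdist_succ.false
  · rw [hM _ _ hodd] at hdist
    exact hdist.false

theorem div_eq_div_of_grayWord_eq (hMinj : ∀ a < m, ∀ a' < m, M a = M a' → a = a') (hp : 0 < p)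
    (hm : 0 < m) {v v' : ℕ} (hv : v ≤ (m - 1) * (2 * p)) (hv' : v' ≤ (m - 1) * (2 * p))
    (heq : grayWord K b v = grayWord K b v') : v / (2 * p) = v' / (2 * p) := by
  have hlt {v : ℕ} (hv : v ≤ (m - 1) * (2 * p)) : v / (2 * p) < m :=
    (Nat.div_le_of_le_mul (by rwa [mul_comm])).trans_lt (by omega)
  rcases le_or_gt (v % (2 * p)) p with hr | hr <;>
    rcases le_or_gt (v' % (2 * p)) p with hr' | hr'
  · refine hMinj _ (hlt hv) _ (hlt hv') ?_
    rw [← grayWord_comp_natAdd hK hM hmono hdiff hv hr,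
      ← grayWord_comp_natAdd hK hM hmono hdiff hv' hr', heq]
  · exact absurd heq (grayWord_ne_of_mod_le_of_lt_mod hK hM hmono hdiff hp hv hv' hr hr')
  · exact absurd heq.symm (grayWord_ne_of_mod_le_of_lt_mod hK hM hmono hdiff hp hv' hv hr' hr)
  · have hq := succ_div_lt_of_le_pred_mul hv (by omega)
    have hq' := succ_div_lt_of_le_pred_mul hv' (by omega)
    refine Nat.succ_injective (hMinj _ (by omega) _ (by omega) ?_)
    rw [← grayWord_comp_castAdd hK hM hmono hdiff hv hr,
      ← grayWord_comp_castAdd hK hM hmono hdiff hv' hr', heq]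

theorem grayWord_injOn (hMinj : ∀ a < m, ∀ a' < m, M a = M a' → a = a') :
    Set.InjOn (grayWord K b) (Set.Iic ((m - 1) * (2 * p))) := by
  intro v hv v' hv' heq
  rw [Set.mem_Iic] at hv hv'
  rcases Nat.eq_zero_or_pos ((m - 1) * (2 * p)) with h0 | hpos
  · omega
  have hp : 0 < p := Nat.pos_of_ne_zero fun h => by simp [h] at hpos
  have hm : 0 < m := Nat.pos_of_ne_zero fun h => by simp [h] at hpos
  have hq := div_eq_div_of_grayWord_eq hK hM hmono hdiff hMinj hp hm hv hv' heq
  suffices v % (2 * p) = v' % (2 * p) by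
    rw [← Nat.div_add_mod v (2 * p), hq, this, Nat.div_add_mod]
  by_contra hne
  wlog hlt : v % (2 * p) < v' % (2 * p) generalizing v v'
  · exact this hv' hv heq.symm hq.symm (Ne.symm hne) (by omega)
  have hstep := succ_div_lt_of_le_pred_mul hv' (by omega)
  rw [← hq] at hstep
  refine flipPrefix_ne_of_lt (hmono _ hstep).injective (hdiff _ hstep) (Nat.mod_lt _ (by omega))
    hlt ?_
  simpa only [grayWord, hq] using heq

end GrayWord

theorem gray_code_injective_general (m d D : ℕ)
    (Cenc : ℕ → Fin d → Bool)
    (hinj : ∀ u < m, ∀ v < m, Cenc u = Cenc v → u = v)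
    (Lenc : ℕ → Fin (d + D) → Bool)
    (hL : ∀ v, Lenc v = if Even v then Fin.append (Cenc v) (fun _ => false)
        else Fin.append (fun i => !(Cenc v i)) (fun _ => true))
    (Kenc : ℕ → Fin (d + (d + D) + (d + (d + D))) → Bool)
    (hK : ∀ v, Kenc v =
      Fin.append (Fin.append (Cenc v) (Lenc v)) (Fin.append (Cenc v) (Lenc v)))
    (b : ℕ → Fin (2 * (d + D)) → Fin (d + (d + D) + (d + (d + D))))
    (hmono : ∀ q, q + 1 < m → StrictMono (b q))
    (hdiffb : ∀ q, q + 1 < m → ∀ i, Kenc q (b q i) ≠ Kenc (q + 1) (b q i))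
    (Genc : ℕ → Fin (d + (d + D) + (d + (d + D))) → Bool)
    (hG : ∀ q r, r < 2 * (d + D) → q * (2 * (d + D)) + r ≤ (m - 1) * (2 * (d + D)) →
      ∀ j, Genc (q * (2 * (d + D)) + r) j =
        if ∃ i : Fin (2 * (d + D)), (i : ℕ) < r ∧ b q i = j then Kenc (q + 1) j else Kenc q j)
    (v v' : ℕ) (hv : v ≤ (m - 1) * (2 * (d + D))) (hv' : v' ≤ (m - 1) * (2 * (d + D)))
    (heq : Genc v = Genc v') :
    v = v' := by
  rcases Nat.eq_zero_or_pos (d + D) with h0 | hpos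
  · simp only [h0, mul_zero, nonpos_iff_eq_zero] at hv hv'
    rw [hv, hv']
  have hGenc (w : ℕ) (hw : w ≤ (m - 1) * (2 * (d + D))) : Genc w = grayWord Kenc b w := by
    funext j
    have := hG (w / (2 * (d + D))) (w % (2 * (d + D))) (Nat.mod_lt _ (by omega))
      (by rwa [Nat.div_add_mod']) j
    rwa [Nat.div_add_mod'] at this
  have hMinj (a : ℕ) (ha : a < m) (a' : ℕ) (ha' : a' < m)
      (h : Fin.append (Cenc a) (Lenc a) = Fin.append (Cenc a') (Lenc a')) : a = a' :=
    hinj a ha a' ha' (funext fun i => by simpa using congrFun h (Fin.castAdd _ i))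
  refine grayWord_injOn hK (fun a a' h => hammingDist_append_complementCode_of_odd_add hL h)
    hmono hdiffb hMinj hv hv' ?_
  rw [← hGenc v hv, ← hGenc v' hv', heq]

/-- The error-correcting Gray code `Genc` built from an injective code `Cenc` of
minimum distance `D` via the four-fold concatenation construction is injective. -/
theorem gray_code_injective (m d D : ℕ)
    (Cenc : ℕ → Fin d → Bool)
    (hinj : ∀ u < m, ∀ v < m, Cenc u = Cenc v → u = v)
    (hdist : ∀ u < m, ∀ v < m, u ≠ v → D ≤ hammingDist (Cenc u) (Cenc v))
    (Lenc : ℕ → Fin (d + D) → Bool)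
    (hL : ∀ v, Lenc v = if Even v then Fin.append (Cenc v) (fun _ => false)
        else Fin.append (fun i => !(Cenc v i)) (fun _ => true))
    (Kenc : ℕ → Fin (d + (d + D) + (d + (d + D))) → Bool)
    (hK : ∀ v, Kenc v =
      Fin.append (Fin.append (Cenc v) (Lenc v)) (Fin.append (Cenc v) (Lenc v)))
    (b : ℕ → Fin (2 * (d + D)) → Fin (d + (d + D) + (d + (d + D))))
    (hmono : ∀ q, q + 1 < m → StrictMono (b q))
    (hdiffb : ∀ q, q + 1 < m → ∀ i, Kenc q (b q i) ≠ Kenc (q + 1) (b q i))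
    (Genc : ℕ → Fin (d + (d + D) + (d + (d + D))) → Bool)
    (hG : ∀ q r, r < 2 * (d + D) → q * (2 * (d + D)) + r ≤ (m - 1) * (2 * (d + D)) →
      ∀ j, Genc (q * (2 * (d + D)) + r) j =
        if ∃ i : Fin (2 * (d + D)), (i : ℕ) < r ∧ b q i = j then Kenc (q + 1) j else Kenc q j)
    (v v' : ℕ) (hv : v ≤ (m - 1) * (2 * (d + D))) (hv' : v' ≤ (m - 1) * (2 * (d + D)))
    (heq : Genc v = Genc v') :
    v = v' :=
  gray_code_injective_general m d D Cenc hinj Lenc hL Kenc hK b hmono hdiffb Genc hG v v' hv hv' heq
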